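/- Let X = ℝ⁴ with Zeeman's fine topology F, the finest topology inducing the Euclidean topology on every vertical line {a + t e₀ : t ∈ ℝ} and on every horizontal hyperplane {y : y₀ = c}. Then F is strictly finer than the Euclidean topology on ℝ⁴. -/

import Mathlib

open Topology

noncomputable section

/-- A time axis: a line parallel to `e₀` through a point `a`. -/
def timeAxis (a : EuclideanSpace ℝ (Fin 4)) : Set (EuclideanSpace ℝ (Fin 4)) :=
  {y | y 1 = a 1 ∧ y 2 = a 2 ∧ y 3 = a 3}

/-- A space hyperplane: points with constant time coordinate `c`. -/
def spaceHyperplane (c : ℝ) : Set (EuclideanSpace ℝ (Fin 4)) :=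
  {y | y 0 = c}

/-- A set is open in Zeeman's fine topology `F` iff its intersection with every time
axis and every space hyperplane is open in the Euclidean subspace topology (i.e. is
the trace of a Euclidean open set). -/
def FOpen (A : Set (EuclideanSpace ℝ (Fin 4))) : Prop :=
  (∀ a : EuclideanSpace ℝ (Fin 4),
    ∃ V, IsOpen V ∧ A ∩ timeAxis a = V ∩ timeAxis a) ∧
  (∀ c : ℝ, ∃ V, IsOpen V ∧ A ∩ spaceHyperplane c = V ∩ spaceHyperplane c)

/-- spatial norm squared -/
def zq (y : EuclideanSpace ℝ (Fin 4)) : ℝ := (y 1)^2 + (y 2)^2 + (y 3)^2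

lemma zq_cont : Continuous zq := by
  have h : ∀ i : Fin 4, Continuous (fun y : EuclideanSpace ℝ (Fin 4) => y i) :=
    fun i => (EuclideanSpace.proj i).continuous
  exact (((h 1).pow 2).add ((h 2).pow 2)).add ((h 3).pow 2)

lemma zq_nonneg (y : EuclideanSpace ℝ (Fin 4)) : 0 ≤ zq y := by
  unfold zq; positivity

/-- punctured upper light cone -/
def zS : Set (EuclideanSpace ℝ (Fin 4)) := {y | y 0 = Real.sqrt (zq y) ∧ zq y ≠ 0}

/-- Zeeman's fine topology `F` is strictly finer than the Euclidean topology on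
`ℝ⁴`: every Euclidean open set is `F`-open, but some `F`-open set is not
Euclidean-open. -/
theorem fine_topology_strictly_finer :
    (∀ U : Set (EuclideanSpace ℝ (Fin 4)), IsOpen U → FOpen U) ∧
    (∃ U : Set (EuclideanSpace ℝ (Fin 4)), FOpen U ∧ ¬ IsOpen U) := by
  constructor
  · intro U hU
    exact ⟨fun a => ⟨U, hU, rfl⟩, fun c => ⟨U, hU, rfl⟩⟩
  refine ⟨zSᶜ, ⟨?_, ?_⟩, ?_⟩
  · -- time axes
    intro a
    have hqL : ∀ y ∈ timeAxis a, zq y = zq a := by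
      rintro y ⟨h1, h2, h3⟩
      simp [zq, h1, h2, h3]
    by_cases hq : zq a = 0
    · refine ⟨Set.univ, isOpen_univ, ?_⟩
      ext y
      simp only [Set.mem_inter_iff, Set.mem_compl_iff, Set.mem_univ, true_and]
      constructor
      · rintro ⟨_, hy⟩; exact hy
      · intro hy
        refine ⟨fun hS => hS.2 ?_, hy⟩
        rw [hqL y hy]; exact hq
    · set p : EuclideanSpace ℝ (Fin 4) :=
        WithLp.toLp 2 (fun i => if i = 0 then Real.sqrt (zq a) else a i) with hp
      have hp0 : p 0 = Real.sqrt (zq a) := by simp [hp]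
      have hp1 : p 1 = a 1 := by simp [hp]
      have hp2 : p 2 = a 2 := by simp [hp]
      have hp3 : p 3 = a 3 := by simp [hp]
      have hpL : p ∈ timeAxis a := ⟨hp1, hp2, hp3⟩
      refine ⟨{p}ᶜ, isClosed_singleton.isOpen_compl, ?_⟩
      ext y
      simp only [Set.mem_inter_iff, Set.mem_compl_iff, Set.mem_singleton_iff]
      constructor
      · rintro ⟨hyS, hyL⟩
        refine ⟨fun hyp => hyS ?_, hyL⟩
        subst hyp
        exact ⟨by rw [hp0, hqL p hpL], by rw [hqL p hpL]; exact hq⟩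
      · rintro ⟨hyp, hyL⟩
        refine ⟨fun hS => hyp ?_, hyL⟩
        have h0 : y 0 = p 0 := by
          rw [hp0, ← hqL y hyL]; exact hS.1
        ext i
        fin_cases i
        · exact h0
        · show y 1 = p 1; rw [hyL.1, ← hp1]
        · show y 2 = p 2; rw [hyL.2.1, ← hp2]
        · show y 3 = p 3; rw [hyL.2.2, ← hp3]
  · -- space hyperplanes
    intro c
    by_cases hc : 0 < c
    · refine ⟨{y | zq y ≠ c^2}, ?_, ?_⟩
      · have : IsOpen ({c^2}ᶜ : Set ℝ) := isClosed_singleton.isOpen_compl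
        exact this.preimage zq_cont
      · ext y
        simp only [Set.mem_inter_iff, Set.mem_compl_iff, Set.mem_setOf_eq,
          spaceHyperplane]
        constructor
        · rintro ⟨hyS, hy0⟩
          refine ⟨fun hq => hyS ⟨?_, ?_⟩, hy0⟩
          · rw [hy0, hq, Real.sqrt_sq hc.le]
          · rw [hq]; positivity
        · rintro ⟨hq, hy0⟩
          refine ⟨fun hS => hq ?_, hy0⟩
          have := hS.1
          rw [hy0] at this
          rw [← Real.sq_sqrt (zq_nonneg y), ← this]
    · refine ⟨Set.univ, isOpen_univ, ?_⟩
      ext y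
      simp only [Set.mem_inter_iff, Set.mem_compl_iff, Set.mem_univ, true_and,
        spaceHyperplane, Set.mem_setOf_eq]
      constructor
      · rintro ⟨_, hy⟩; exact hy
      · intro hy
        refine ⟨fun hS => ?_, hy⟩
        have hpos : 0 < Real.sqrt (zq y) :=
          Real.sqrt_pos.mpr (lt_of_le_of_ne (zq_nonneg y) (Ne.symm hS.2))
        rw [← hS.1, hy] at hpos
        exact hc hpos
  · -- not Euclidean open
    intro h
    have h0 : (0 : EuclideanSpace ℝ (Fin 4)) ∈ zSᶜ := by
      intro hS
      exact hS.2 (by simp [zq])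
    obtain ⟨ε, hε, hball⟩ := Metric.isOpen_iff.mp h 0 h0
    set p : EuclideanSpace ℝ (Fin 4) :=
      WithLp.toLp 2 (fun (i : Fin 4) => if i = 0 ∨ i = 1 then ε/2 else 0) with hp
    have hp0 : p 0 = ε/2 := by simp [hp]
    have hp1 : p 1 = ε/2 := by simp [hp]
    have hp2 : p 2 = 0 := by simp [hp]
    have hp3 : p 3 = 0 := by simp [hp]
    have hqp : zq p = (ε/2)^2 := by simp [zq, hp1, hp2, hp3]
    have hpS : p ∈ zS := by
      constructor
      · rw [hp0, hqp, Real.sqrt_sq (by positivity)]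
      · rw [hqp]; positivity
    have hdist : dist p 0 < ε := by
      rw [EuclideanSpace.dist_eq]
      rw [Real.sqrt_lt' hε]
      rw [Fin.sum_univ_four]
      have hz : ∀ i : Fin 4, (0 : EuclideanSpace ℝ (Fin 4)) i = 0 := fun _ => rfl
      simp only [hp0, hp1, hp2, hp3, hz, dist_self, Real.dist_eq, sub_zero]
      rw [abs_of_pos (by positivity : (0:ℝ) < ε/2)]
      nlinarith
    exact hball hdist hpS
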